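/- arXiv:1402.4538 — 2 statements merged into one kernel-verified Lean document; each statement's English description precedes it below -/
import Mathlib

section
/- Let s be a positive integer and let X_1, …, X_s be non-negative integers. Then for every complex number q that is neither 0 nor a root of unity, det_{1≤i,j≤s} ( 1/[X_i + j]_q! ) = q^{2·C(s+1,3) + ∑_{i=1}^{s} (i−1) X_i} · ∏_{i=1}^{s} ( 1/[X_i + s]_q! ) · ∏_{1≤i<j≤s} [X_i − X_j]_q. -/
open Finset

noncomputable def qint (q : ℂ) (a : ℤ) : ℂ := (1 - q ^ a) / (1 - q)

noncomputable def qfac (q : ℂ) (k : ℕ) : ℂ := ∏ i ∈ Finset.range k, qint q ((i : ℤ) + 1)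

lemma one_sub_q_ne {q : ℂ} (hqru : ∀ k : ℕ, 0 < k → q ^ k ≠ 1) : (1 : ℂ) - q ≠ 0 := by
  have := hqru 1 one_pos
  simp only [pow_one] at this
  intro h; apply this; linear_combination -h

lemma qint_nat (q : ℂ) (k : ℕ) : qint q (k : ℤ) = (1 - q ^ k) / (1 - q) := by
  simp [qint, zpow_natCast]

lemma qint_pos_ne {q : ℂ} (hqru : ∀ k : ℕ, 0 < k → q ^ k ≠ 1) (k : ℕ) (hk : 0 < k) :
    qint q (k : ℤ) ≠ 0 := by
  rw [qint_nat]
  exact div_ne_zero (sub_ne_zero.mpr fun h => hqru k hk h.symm) (one_sub_q_ne hqru)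

lemma qfac_ne {q : ℂ} (hqru : ∀ k : ℕ, 0 < k → q ^ k ≠ 1) (k : ℕ) : qfac q k ≠ 0 := by
  rw [qfac]
  apply Finset.prod_ne_zero_iff.mpr
  intro i _
  have : ((i : ℤ) + 1) = ((i + 1 : ℕ) : ℤ) := by push_cast; ring
  rw [this]
  exact qint_pos_ne hqru _ (Nat.succ_pos i)

lemma qint_add {q : ℂ} (hqru : ∀ k : ℕ, 0 < k → q ^ k ≠ 1) (a r : ℕ) :
    qint q ((a + r + 1 : ℕ) : ℤ) = qint q ((r + 1 : ℕ) : ℤ) + q ^ (r + 1) * qint q (a : ℤ) := by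
  rw [qint_nat, qint_nat, qint_nat]
  field_simp [one_sub_q_ne hqru]
  ring

lemma qint_sub {q : ℂ} (hq0 : q ≠ 0) (a b : ℕ) :
    qint q (a : ℤ) - qint q (b : ℤ) = q ^ b * qint q ((a : ℤ) - b) := by
  rw [qint_nat, qint_nat, qint, div_sub_div_same, ← mul_div_assoc]
  congr 1
  rw [mul_sub, mul_one, zpow_sub₀ hq0, zpow_natCast, zpow_natCast]
  field_simp
  ring

lemma sum_rr (s : ℕ) : ∑ r ∈ range s, r * (r + 1) = 2 * (s + 1).choose 3 := by
  induction s with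
  | zero => decide
  | succ n ih =>
    rw [Finset.sum_range_succ, ih]
    have hd : 2 ∣ (n + 1) * n := by
      have := Nat.even_mul_succ_self n
      rw [mul_comm] at this
      exact this.two_dvd
    have h2 : 2 * (n + 1).choose 2 = n * (n + 1) := by
      rw [Nat.choose_two_right, Nat.add_sub_cancel, Nat.mul_div_cancel' hd, mul_comm]
    have h3 : (n + 1 + 1).choose 3 = (n + 1).choose 2 + (n + 1).choose 3 :=
      Nat.choose_succ_succ _ _
    omega

lemma sum_e (s : ℕ) : ∑ k ∈ range s, ∑ r ∈ Ico (k + 1) s, (r + 1) = 2 * (s + 1).choose 3 := by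
  rw [Finset.sum_comm' (t' := range s) (s' := fun r => range r) (by intro x y; simp; omega)]
  rw [← sum_rr s]
  apply Finset.sum_congr rfl
  intro r _
  simp [Finset.sum_const, mul_comm]

lemma swap_Ioi_Iio {M : Type*} [CommMonoid M] {s : ℕ} (f : Fin s → Fin s → M) :
    ∏ i : Fin s, ∏ j ∈ Ioi i, f i j = ∏ j : Fin s, ∏ i ∈ Iio j, f i j :=
  Finset.prod_comm' (by intro x y; simp)

lemma prod_rev_pairs {M : Type*} [CommMonoid M] {s : ℕ} (g : Fin s → Fin s → M) :
    ∏ i : Fin s, ∏ j ∈ Ioi i, g (Fin.rev j) (Fin.rev i) = ∏ i : Fin s, ∏ j ∈ Ioi i, g i j := by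
  have inner : ∀ i : Fin s, ∏ j ∈ Ioi i, g (Fin.rev j) (Fin.rev i) =
      ∏ j ∈ Iio (Fin.rev i), g j (Fin.rev i) := by
    intro i
    apply Finset.prod_nbij' (fun j => Fin.rev j) (fun j => Fin.rev j)
    · intro a ha; simp only [mem_Ioi] at ha; simp [Fin.rev_lt_rev, ha]
    · intro a ha; simp only [mem_Iio] at ha
      simp only [mem_Ioi]
      have h2 : Fin.rev a.rev < Fin.rev i := by rwa [Fin.rev_rev]
      exact Fin.rev_lt_rev.mp h2
    · intro a _; exact Fin.rev_rev a
    · intro a _; exact Fin.rev_rev a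
    · intro a _; rfl
  simp_rw [inner]
  rw [Fintype.prod_bijective Fin.rev Fin.rev_involutive.bijective _
    (fun y => ∏ j ∈ Iio y, g j y) (fun x => rfl)]
  exact (swap_Ioi_Iio g).symm

lemma sum_Ioi_X {s : ℕ} (X : Fin s → ℕ) :
    ∑ i : Fin s, ∑ j ∈ Ioi i, X j = ∑ i : Fin s, (i : ℕ) * X i := by
  rw [Finset.sum_comm' (t' := univ) (s' := fun j => Iio j) (by intro x y; simp)]
  apply Finset.sum_congr rfl
  intro j _
  rw [Finset.sum_const, Fin.card_Iio, smul_eq_mul]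

noncomputable def pp (q : ℂ) (s k : ℕ) : Polynomial ℂ :=
  ∏ r ∈ Ico (s - k) s, (Polynomial.C (q ^ (r + 1)) * Polynomial.X
    + Polynomial.C (qint q ((r + 1 : ℕ) : ℤ)))

lemma pp_factor_ne {q : ℂ} (hq0 : q ≠ 0) (r : ℕ) :
    (Polynomial.C (q ^ (r + 1)) * Polynomial.X + Polynomial.C (qint q ((r + 1 : ℕ) : ℤ))) ≠ 0 := by
  intro h
  have h1 := Polynomial.natDegree_linear (pow_ne_zero (r+1) hq0)
      (b := qint q ((r + 1 : ℕ) : ℤ))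
  rw [h] at h1
  simp at h1

lemma pp_natDegree {q : ℂ} (hq0 : q ≠ 0) (s k : ℕ) (hk : k ≤ s) : (pp q s k).natDegree = k := by
  rw [pp, Polynomial.natDegree_prod _ _ (fun r _ => pp_factor_ne hq0 r)]
  rw [Finset.sum_congr rfl (fun r _ => Polynomial.natDegree_linear (pow_ne_zero (r+1) hq0))]
  rw [Finset.sum_const, Nat.card_Ico, smul_eq_mul, mul_one]
  omega

lemma pp_leadingCoeff {q : ℂ} (hq0 : q ≠ 0) (s k : ℕ) :
    (pp q s k).leadingCoeff = q ^ (∑ r ∈ Ico (s - k) s, (r + 1)) := by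
  rw [pp, Polynomial.leadingCoeff_prod, ← Finset.prod_pow_eq_pow_sum]
  exact Finset.prod_congr rfl (fun r _ =>
    Polynomial.leadingCoeff_linear (pow_ne_zero (r+1) hq0))

lemma pp_eval {q : ℂ} (s k : ℕ) (z : ℂ) :
    (pp q s k).eval z = ∏ r ∈ Ico (s - k) s, (q ^ (r + 1) * z + qint q ((r + 1 : ℕ) : ℤ)) := by
  rw [pp, Polynomial.eval_prod]
  simp

lemma qfac_split {q : ℂ} (a m n : ℕ) (h : m ≤ n) :
    qfac q (a + n) = qfac q (a + m) * ∏ r ∈ Ico m n, qint q ((a + r + 1 : ℕ) : ℤ) := by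
  rw [qfac, qfac, ← Finset.prod_range_mul_prod_Ico _ (Nat.add_le_add_left h a)]
  congr 1
  rw [Finset.prod_Ico_eq_prod_range, Finset.prod_Ico_eq_prod_range]
  have hc : a + n - (a + m) = n - m := by omega
  rw [hc]
  apply Finset.prod_congr rfl
  intro i _
  congr 1
  push_cast
  ring

theorem det_one_div_qfac (s : ℕ) (hs : 0 < s) (X : Fin s → ℕ)
    (q : ℂ) (hq0 : q ≠ 0) (hqru : ∀ k : ℕ, 0 < k → q ^ k ≠ 1) :
    Matrix.det (Matrix.of fun i j : Fin s => 1 / qfac q (X i + ((j : ℕ) + 1))) =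
      q ^ (2 * (s + 1).choose 3 + ∑ i : Fin s, (i : ℕ) * X i) *
        (∏ i : Fin s, 1 / qfac q (X i + s)) *
        ∏ i : Fin s, ∏ j : Fin s, if i < j then qint q ((X i : ℤ) - (X j : ℤ)) else 1 := by
  have h1q := one_sub_q_ne hqru
  set t : Fin s → ℂ := fun i => qint q (X i) with ht
  set E : Matrix (Fin s) (Fin s) ℂ :=
    Matrix.of (fun i j : Fin s => ∏ r ∈ Ico ((j:ℕ)+1) s, qint q ((X i + r + 1 : ℕ) : ℤ)) with hE
  have hEne : ∀ i (j : Fin s), (∏ r ∈ Ico ((j:ℕ)+1) s, qint q ((X i + r + 1 : ℕ) : ℤ)) ≠ 0 := by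
    intro i j
    exact Finset.prod_ne_zero_iff.mpr fun r _ => qint_pos_ne hqru _ (by omega)
  have step2 : Matrix.det (Matrix.of fun i j : Fin s => 1 / qfac q (X i + ((j:ℕ)+1))) =
      (∏ i : Fin s, 1 / qfac q (X i + s)) * E.det := by
    rw [← Matrix.det_mul_column (fun i => 1 / qfac q (X i + s)) E]
    congr 1
    ext i j
    simp only [Matrix.of_apply, hE]
    rw [qfac_split (X i) ((j:ℕ)+1) s (by omega)]
    have h2 := qfac_ne hqru (X i + ((j:ℕ)+1))
    have h3 := hEne i j
    push_cast at h3
    field_simp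
    exact (div_self (hEne i j)).symm
  -- the polynomial matrix
  set u : Fin s → ℂ := fun i => t (Fin.rev i) with hu
  set A : Matrix (Fin s) (Fin s) ℂ :=
    Matrix.of (fun i j : Fin s => (pp q s (j:ℕ)).eval (u i)) with hA
  have hdegle : ∀ j : Fin s, (pp q s (j:ℕ)).natDegree ≤ (j:ℕ) :=
    fun j => le_of_eq (pp_natDegree hq0 s j (le_of_lt j.isLt))
  have step3 : E.det = A.det := by
    have hEA : E = A.submatrix Fin.revPerm Fin.revPerm := by
      ext i j
      simp only [hE, hA, Matrix.submatrix_apply, Matrix.of_apply, hu, Fin.revPerm_apply]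
      rw [Fin.rev_rev, pp_eval]
      have hIco : s - ((Fin.rev j : ℕ)) = (j:ℕ) + 1 := by
        have := j.isLt
        simp [Fin.rev]
        omega
      rw [hIco]
      apply Finset.prod_congr rfl
      intro r _
      rw [qint_add hqru (X i) r, ht]
      ring
    rw [hEA, Matrix.det_submatrix_equiv_self]
  have step4 : A.det = (Matrix.vandermonde u).det *
      (Matrix.of (fun i j : Fin s => (pp q s (j:ℕ)).coeff i)).det := by
    rw [hA, Matrix.eval_matrixOfPolynomials_eq_vandermonde_mul_matrixOfPolynomials u
      (fun j : Fin s => pp q s (j:ℕ)) hdegle, Matrix.det_mul]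
  have step5 : (Matrix.of (fun i j : Fin s => (pp q s (j:ℕ)).coeff i)).det =
      q ^ (2 * (s+1).choose 3) := by
    rw [Matrix.det_of_upperTriangular (Matrix.matrixOfPolynomials_blockTriangular _ hdegle)]
    have hdiag : ∀ j : Fin s, (pp q s (j:ℕ)).coeff (j:ℕ) = (pp q s (j:ℕ)).leadingCoeff := by
      intro j
      rw [Polynomial.leadingCoeff, pp_natDegree hq0 s j (le_of_lt j.isLt)]
    calc ∏ j : Fin s, (pp q s (j:ℕ)).coeff (j:ℕ)
        = ∏ j : Fin s, q ^ (∑ r ∈ Ico (s - (j:ℕ)) s, (r+1)) := by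
          exact Finset.prod_congr rfl fun j _ => by rw [hdiag j, pp_leadingCoeff hq0]
      _ = q ^ (∑ j : Fin s, ∑ r ∈ Ico (s - (j:ℕ)) s, (r+1)) := Finset.prod_pow_eq_pow_sum _ _ _
      _ = q ^ (2 * (s+1).choose 3) := by
          congr 1
          rw [Fin.sum_univ_eq_sum_range (fun k => ∑ r ∈ Ico (s - k) s, (r+1))]
          have hr : ∀ k ∈ range s, (∑ r ∈ Ico (s - k) s, (r+1)) =
              (fun k => ∑ r ∈ Ico (k + 1) s, (r+1)) (s - 1 - k) := by
            intro k hk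
            rw [Finset.mem_range] at hk
            have h5 : s - 1 - k + 1 = s - k := by omega
            simp only [h5]
          rw [Finset.sum_congr rfl hr,
            Finset.sum_range_reflect (fun k => ∑ r ∈ Ico (k + 1) s, (r+1)) s]
          exact sum_e s
  have step7 : (Matrix.vandermonde u).det =
      q ^ (∑ i : Fin s, (i:ℕ) * X i) *
        ∏ i : Fin s, ∏ j ∈ Ioi i, qint q ((X i : ℤ) - (X j : ℤ)) := by
    rw [Matrix.det_vandermonde]
    have : ∀ i : Fin s, ∀ j ∈ Ioi i, u j - u i =
        (fun a b => t a - t b) (Fin.rev j) (Fin.rev i) := by intro i j _; rfl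
    rw [Finset.prod_congr rfl (fun i _ => Finset.prod_congr rfl (this i))]
    rw [prod_rev_pairs (fun a b => t a - t b)]
    have h4 : ∀ i : Fin s, ∀ j ∈ Ioi i, t i - t j =
        q ^ (X j) * qint q ((X i : ℤ) - (X j : ℤ)) := by
      intro i j _
      exact qint_sub hq0 (X i) (X j)
    rw [Finset.prod_congr rfl (fun i _ => Finset.prod_congr rfl (h4 i))]
    simp_rw [Finset.prod_mul_distrib, Finset.prod_pow_eq_pow_sum]
    rw [sum_Ioi_X X]
  have step8 : ∀ i : Fin s, (∏ j : Fin s, if i < j then qint q ((X i : ℤ) - (X j : ℤ)) else 1) =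
      ∏ j ∈ Ioi i, qint q ((X i : ℤ) - (X j : ℤ)) := by
    intro i
    rw [← Finset.prod_filter, Finset.filter_lt_eq_Ioi]
  rw [step2, step3, step4, step5, step7]
  rw [Finset.prod_congr rfl (fun i _ => step8 i), pow_add]
  ring
end

section
/- Let N, n, m, r be non-negative integers with N ≥ n ≥ r ≥ 1 and N − r + 1 ≥ m, and let q be a complex number that is neither 0 nor a root of unity. For integers 0 ≤ k_1 < … < k_r, let S(k_1,…,k_r) = q^{−2∑_{i=1}^{r} (2i−1) k_i} · ∏_{1≤i<j≤r} (1 − q^{−2(k_i−k_j)})² · ∏_{i=1}^{r} ( (q^{N−m+r−1}; q^{−2})_{k_i} · (q^{N−m+r−2}; q^{−2})_{k_i} · (q^{2n−2}; q^{−2})_{k_i} ) / ( (q^{N+n−1}; q^{−2})_{k_i} · (q^{N+n−2}; q^{−2})_{k_i} · (q^{−2}; q^{−2})_{k_i} ). Then the sum of S(k_1,…,k_r) over all 0 ≤ k_1 < … < k_r ≤ n−1 equals the sum of S(k_1,…,k_r) over all 0 ≤ k_1 < … < k_r ≤ ⌊(N−m+r−1)/2⌋. -/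
open Finset

noncomputable def qpoch (x q : ℂ) (k : ℕ) : ℂ := ∏ j ∈ Finset.range k, (1 - x * q ^ j)

open Classical in
noncomputable def strictTuples (s L : ℕ) : Finset (Fin s → ℕ) :=
  Finset.filter (fun l => StrictMono l)
    (Fintype.piFinset fun _ : Fin s => Finset.range (L + 1))

lemma qpoch_zero (q : ℂ) (hq0 : q ≠ 0) (a : ℤ) (k j : ℕ) (hj : j < k)
    (ha : a = 2 * (j : ℤ)) : qpoch (q ^ a) (q ^ (-2 : ℤ)) k = 0 := by
  apply Finset.prod_eq_zero (Finset.mem_range.2 hj)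
  have h1 : (q ^ a) * (q ^ (-2 : ℤ)) ^ j = q ^ (a + (-2) * (j : ℤ)) := by
    rw [← zpow_natCast (q ^ (-2 : ℤ)) j, ← zpow_mul, ← zpow_add₀ hq0]
  rw [h1, show a + (-2) * (j : ℤ) = 0 by omega, zpow_zero, sub_self]

lemma mem_strictTuples {s L : ℕ} {k : Fin s → ℕ} :
    k ∈ strictTuples s L ↔ StrictMono k ∧ ∀ i, k i ≤ L := by
  classical
  simp [strictTuples, Fintype.mem_piFinset, Nat.lt_succ_iff, and_comm]

lemma strictTuples_subset {s : ℕ} {a b : ℕ} (h : a ≤ b) :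
    strictTuples s a ⊆ strictTuples s b := by
  intro k hk
  rw [mem_strictTuples] at hk ⊢
  exact ⟨hk.1, fun i => (hk.2 i).trans h⟩

theorem sum_range_extension
    (N n m r : ℕ) (hnN : n ≤ N) (hrn : r ≤ n) (hr : 1 ≤ r) (hm : m + r ≤ N + 1)
    (q : ℂ) (hq0 : q ≠ 0) (hqru : ∀ k : ℕ, 0 < k → q ^ k ≠ 1) :
    (∑ k ∈ strictTuples r (n - 1),
        q ^ (-2 * ∑ i : Fin r, (2 * ((i : ℕ) : ℤ) + 1) * (k i : ℤ)) *
          (∏ i : Fin r, ∏ j : Fin r,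
            if i < j then (1 - q ^ (-2 * ((k i : ℤ) - (k j : ℤ)))) ^ 2 else 1) *
          ∏ i : Fin r,
            qpoch (q ^ ((N : ℤ) - m + r - 1)) (q ^ (-2 : ℤ)) (k i) *
              qpoch (q ^ ((N : ℤ) - m + r - 2)) (q ^ (-2 : ℤ)) (k i) *
              qpoch (q ^ (2 * (n : ℤ) - 2)) (q ^ (-2 : ℤ)) (k i) /
              (qpoch (q ^ ((N : ℤ) + n - 1)) (q ^ (-2 : ℤ)) (k i) *
                qpoch (q ^ ((N : ℤ) + n - 2)) (q ^ (-2 : ℤ)) (k i) *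
                qpoch (q ^ (-2 : ℤ)) (q ^ (-2 : ℤ)) (k i))) =
      ∑ k ∈ strictTuples r ((N + r - 1 - m) / 2),
        q ^ (-2 * ∑ i : Fin r, (2 * ((i : ℕ) : ℤ) + 1) * (k i : ℤ)) *
          (∏ i : Fin r, ∏ j : Fin r,
            if i < j then (1 - q ^ (-2 * ((k i : ℤ) - (k j : ℤ)))) ^ 2 else 1) *
          ∏ i : Fin r,
            qpoch (q ^ ((N : ℤ) - m + r - 1)) (q ^ (-2 : ℤ)) (k i) *
              qpoch (q ^ ((N : ℤ) - m + r - 2)) (q ^ (-2 : ℤ)) (k i) *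
              qpoch (q ^ (2 * (n : ℤ) - 2)) (q ^ (-2 : ℤ)) (k i) /
              (qpoch (q ^ ((N : ℤ) + n - 1)) (q ^ (-2 : ℤ)) (k i) *
                qpoch (q ^ ((N : ℤ) + n - 2)) (q ^ (-2 : ℤ)) (k i) *
                qpoch (q ^ (-2 : ℤ)) (q ^ (-2 : ℤ)) (k i)) := by
  have hn1 : 1 ≤ n := hr.trans hrn
  set t := N + r - 1 - m with ht
  set F : (Fin r → ℕ) → ℂ := fun k =>
    q ^ (-2 * ∑ i : Fin r, (2 * ((i : ℕ) : ℤ) + 1) * (k i : ℤ)) *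
      (∏ i : Fin r, ∏ j : Fin r,
        if i < j then (1 - q ^ (-2 * ((k i : ℤ) - (k j : ℤ)))) ^ 2 else 1) *
      ∏ i : Fin r,
        qpoch (q ^ ((N : ℤ) - m + r - 1)) (q ^ (-2 : ℤ)) (k i) *
          qpoch (q ^ ((N : ℤ) - m + r - 2)) (q ^ (-2 : ℤ)) (k i) *
          qpoch (q ^ (2 * (n : ℤ) - 2)) (q ^ (-2 : ℤ)) (k i) /
          (qpoch (q ^ ((N : ℤ) + n - 1)) (q ^ (-2 : ℤ)) (k i) *
            qpoch (q ^ ((N : ℤ) + n - 2)) (q ^ (-2 : ℤ)) (k i) *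
            qpoch (q ^ (-2 : ℤ)) (q ^ (-2 : ℤ)) (k i)) with hF
  set M := max (n - 1) (t / 2) with hM
  have h1 : ∑ k ∈ strictTuples r (n - 1), F k = ∑ k ∈ strictTuples r M, F k := by
    apply Finset.sum_subset (strictTuples_subset (le_max_left _ _))
    intro k hk hk'
    rw [mem_strictTuples] at hk hk'
    push_neg at hk'
    obtain ⟨i, hi⟩ := hk' hk.1
    have hfac : qpoch (q ^ (2 * (n : ℤ) - 2)) (q ^ (-2 : ℤ)) (k i) = 0 :=
      qpoch_zero q hq0 _ _ (n - 1) hi (by omega)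
    have hprod : (∏ i : Fin r,
        qpoch (q ^ ((N : ℤ) - m + r - 1)) (q ^ (-2 : ℤ)) (k i) *
          qpoch (q ^ ((N : ℤ) - m + r - 2)) (q ^ (-2 : ℤ)) (k i) *
          qpoch (q ^ (2 * (n : ℤ) - 2)) (q ^ (-2 : ℤ)) (k i) /
          (qpoch (q ^ ((N : ℤ) + n - 1)) (q ^ (-2 : ℤ)) (k i) *
            qpoch (q ^ ((N : ℤ) + n - 2)) (q ^ (-2 : ℤ)) (k i) *
            qpoch (q ^ (-2 : ℤ)) (q ^ (-2 : ℤ)) (k i))) = 0 :=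
      Finset.prod_eq_zero (Finset.mem_univ i) (by rw [hfac]; ring)
    simp only [hF, hprod, mul_zero]
  have h2 : ∑ k ∈ strictTuples r (t / 2), F k = ∑ k ∈ strictTuples r M, F k := by
    apply Finset.sum_subset (strictTuples_subset (le_max_right _ _))
    intro k hk hk'
    rw [mem_strictTuples] at hk hk'
    push_neg at hk'
    obtain ⟨i, hi⟩ := hk' hk.1
    have hfac : qpoch (q ^ ((N : ℤ) - m + r - 1)) (q ^ (-2 : ℤ)) (k i) *
        qpoch (q ^ ((N : ℤ) - m + r - 2)) (q ^ (-2 : ℤ)) (k i) = 0 := by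
      rcases Nat.even_or_odd t with he | ho
      · rw [Nat.even_iff] at he
        rw [qpoch_zero q hq0 _ _ (t / 2) hi (by omega), zero_mul]
      · rw [Nat.odd_iff] at ho
        rw [qpoch_zero q hq0 ((N : ℤ) - m + r - 2) _ (t / 2) hi (by omega), mul_zero]
    have hprod : (∏ i : Fin r,
        qpoch (q ^ ((N : ℤ) - m + r - 1)) (q ^ (-2 : ℤ)) (k i) *
          qpoch (q ^ ((N : ℤ) - m + r - 2)) (q ^ (-2 : ℤ)) (k i) *
          qpoch (q ^ (2 * (n : ℤ) - 2)) (q ^ (-2 : ℤ)) (k i) /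
          (qpoch (q ^ ((N : ℤ) + n - 1)) (q ^ (-2 : ℤ)) (k i) *
            qpoch (q ^ ((N : ℤ) + n - 2)) (q ^ (-2 : ℤ)) (k i) *
            qpoch (q ^ (-2 : ℤ)) (q ^ (-2 : ℤ)) (k i))) = 0 :=
      Finset.prod_eq_zero (Finset.mem_univ i)
        (by
          rw [div_eq_zero_iff]
          left
          linear_combination qpoch (q ^ (2 * (n : ℤ) - 2)) (q ^ (-2 : ℤ)) (k i) * hfac)
    simp only [hF, hprod, mul_zero]
  exact h1.trans h2.symm
end
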